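/- arXiv:1305.3752 — 4 statements merged into one kernel-verified Lean document; each statement's English description precedes it below -/
import Mathlib

section
/- Let θ > 0 and let 𝔥 be a dimension function with 𝔥(x) = (log(1/x))^{-θ} for all small x > 0. If E ⊆ ℝ² is an F_𝔥-set, then the Hausdorff dimension of E satisfies dim_H(E) ≥ 1/2. -/
open MeasureTheory Set Filter

/-- Generalized Hausdorff measure on the plane associated with a dimension function. -/
noncomputable def genH (h : ℝ → ℝ) : Measure (EuclideanSpace ℝ (Fin 2)) :=
  Measure.mkMetric fun d => ENNReal.ofReal (h d.toReal)

/-- A dimension function: nondecreasing, continuous on `[0,∞)`, `h 0 = 0`, nonnegative. -/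
def IsDimFun (h : ℝ → ℝ) : Prop :=
  MonotoneOn h (Ici 0) ∧ ContinuousOn h (Ici 0) ∧ h 0 = 0 ∧ ∀ x ≥ (0:ℝ), 0 ≤ h x

/-- Doubling condition for a dimension function. -/
def IsDoubling (h : ℝ → ℝ) : Prop := ∃ C > (0:ℝ), ∀ x ≥ (0:ℝ), h (2 * x) ≤ C * h x

/-- `E` is an `F_𝔥`-set: for each unit direction there is a unit segment in that
direction meeting `E` in a set of positive `H^𝔥` measure. -/
def IsFurstenberg (𝔥 : ℝ → ℝ) (E : Set (EuclideanSpace ℝ (Fin 2))) : Prop :=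
  ∀ e : EuclideanSpace ℝ (Fin 2), ‖e‖ = 1 →
    ∃ x : EuclideanSpace ℝ (Fin 2), 0 < genH 𝔥 (segment ℝ x (x + e) ∩ E)

/-!
Suppose `dim_H E < s < 1/2`. Then `E` has covers by small pieces with `∑ (diam)^s ≤ 1`. Group the
pieces into blocks with diameters in `(R (i+1), R i]`, `R` decaying super-exponentially, and call
a slope bad if it is the slope of a segment joining two pieces of one block at distance `≥ D i`.
A block has at most `R (i+1) ^ (-s)` pieces and each pair of pieces captures a set of slopes of
measure `≲ R i / D i`, so if `R i ≤ D i ^ 2 * R (i+1) ^ (2s)` the bad slopes have measure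
`≲ ∑ D i < 1`. On a line of good slope each block leaves a trace of diameter `≤ D i`, so the line
carries `H^𝔥`-mass at most `∑ 𝔥 (D i) = ∑ log (1 / D i) ^ (-θ)`; since `log (1 / D i)` grows
geometrically, this is as small as we like. This contradicts the positivity of the `H^𝔥`-mass
of `E` on the unit segments, which is bounded below uniformly on a set of slopes of measure `> 1`.
-/

open Metric
open scoped ENNReal NNReal Topology

noncomputable section

namespace Furstenberg

local notation "ℝ²" => EuclideanSpace ℝ (Fin 2)

def slopeVec (u : ℝ) : ℝ² := !₂[1, u]

def unitSlopeVec (u : ℝ) : ℝ² := ‖slopeVec u‖⁻¹ • slopeVec u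

@[simp] lemma slopeVec_zero (u : ℝ) : slopeVec u 0 = 1 := by simp [slopeVec]

@[simp] lemma slopeVec_one (u : ℝ) : slopeVec u 1 = u := by simp [slopeVec]

lemma slopeVec_ne_zero (u : ℝ) : slopeVec u ≠ 0 := fun h => by
  simpa using congrArg (fun v : ℝ² => v 0) h

lemma norm_unitSlopeVec (u : ℝ) : ‖unitSlopeVec u‖ = 1 :=
  norm_smul_inv_norm (slopeVec_ne_zero u)

lemma norm_slopeVec_le_two {u : ℝ} (hu : |u| ≤ 1) : ‖slopeVec u‖ ≤ 2 := by
  have hu2 : u ^ 2 ≤ 1 := by nlinarith [abs_nonneg u, sq_abs u]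
  rw [EuclideanSpace.norm_eq, Real.sqrt_le_left (by norm_num)]
  simp only [Real.norm_eq_abs, sq_abs, Fin.sum_univ_two, slopeVec_zero, slopeVec_one, one_pow]
  linarith

lemma abs_sub_le_of_norm_smul_slopeVec_sub_le {u u' c c' κ : ℝ} (hu' : |u'| ≤ 1) (hc : 0 < c)
    (h : ‖c • slopeVec u - c' • slopeVec u'‖ ≤ κ) : |u - u'| ≤ 2 * κ / c := by
  have h0 : |c - c'| ≤ κ := by
    simpa using (PiLp.norm_apply_le (c • slopeVec u - c' • slopeVec u') 0).trans h
  have h1 : |c * u - c' * u'| ≤ κ := by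
    simpa using (PiLp.norm_apply_le (c • slopeVec u - c' • slopeVec u') 1).trans h
  rw [le_div_iff₀ hc, ← abs_of_pos hc, ← abs_mul]
  calc |(u - u') * c| = |(c * u - c' * u') - u' * (c - c')| := by ring_nf
    _ ≤ |c * u - c' * u'| + |u'| * |c - c'| := by rw [← abs_mul]; exact abs_sub _ _
    _ ≤ κ + 1 * κ := by gcongr
    _ = 2 * κ := by ring

def IsAlongSlope (u : ℝ) (L : Set ℝ²) : Prop :=
  ∀ x ∈ L, ∀ y ∈ L, ∃ τ : ℝ, y - x = τ • slopeVec u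

lemma IsAlongSlope.mono {u : ℝ} {L L' : Set ℝ²} (h : IsAlongSlope u L) (hL' : L' ⊆ L) :
    IsAlongSlope u L' :=
  fun x hx y hy => h x (hL' hx) y (hL' hy)

lemma isAlongSlope_segment (u c : ℝ) (p : ℝ²) :
    IsAlongSlope u (segment ℝ p (p + c • slopeVec u)) := by
  rw [segment_eq_image']
  rintro _ ⟨a, -, rfl⟩ _ ⟨b, -, rfl⟩
  exact ⟨(b - a) * c, by simp only [add_sub_cancel_left, smul_smul, sub_mul, sub_smul]; abel⟩

def slopeCapture (D : ℝ) (P Q : Set ℝ²) : Set ℝ :=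
  {u ∈ Icc (-1) 1 | ∃ x ∈ P, ∃ y ∈ Q, D ≤ dist x y ∧ ∃ c : ℝ, 0 < c ∧ y - x = c • slopeVec u}

lemma abs_sub_le_of_mem_slopeCapture {D δ : ℝ} {P Q : Set ℝ²} (hD : 0 < D) (hδ : 0 ≤ δ)
    (hP : ediam P ≤ ENNReal.ofReal δ) (hQ : ediam Q ≤ ENNReal.ofReal δ) {u u' : ℝ}
    (hu : u ∈ slopeCapture D P Q) (hu' : u' ∈ slopeCapture D P Q) :
    |u - u'| ≤ 8 * δ / D := by
  obtain ⟨huI, x, hx, y, hy, hxy, c, hc, hyx⟩ := hu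
  obtain ⟨hu'I, x', hx', y', hy', -, c', -, hyx'⟩ := hu'
  have hdist : ∀ {S : Set ℝ²}, ediam S ≤ ENNReal.ofReal δ → ∀ {z z' : ℝ²}, z ∈ S → z' ∈ S →
      ‖z - z'‖ ≤ δ := fun {_} hS {_ _} hz hz' =>
    (dist_eq_norm _ _).symm.trans_le ((edist_le_ofReal hδ).1 (edist_le_of_ediam_le hz hz' hS))
  have hclose : ‖c • slopeVec u - c' • slopeVec u'‖ ≤ 2 * δ := by
    rw [← hyx, ← hyx', show y - x - (y' - x') = (y - y') - (x - x') by abel]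
    linarith [norm_sub_le (y - y') (x - x'), hdist hQ hy hy', hdist hP hx hx']
  have hcD : D / 2 ≤ c := by
    have : D ≤ c * 2 := calc
      D ≤ ‖y - x‖ := by rwa [← dist_eq_norm, dist_comm]
      _ = c * ‖slopeVec u‖ := by rw [hyx, norm_smul, Real.norm_of_nonneg hc.le]
      _ ≤ c * 2 := by gcongr; exact norm_slopeVec_le_two (abs_le.2 huI)
    linarith
  calc |u - u'| ≤ 2 * (2 * δ) / c :=
        abs_sub_le_of_norm_smul_slopeVec_sub_le (abs_le.2 hu'I) hc hclose
    _ ≤ 2 * (2 * δ) / (D / 2) := by gcongr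
    _ = 8 * δ / D := by ring

lemma volume_slopeCapture_le {D δ : ℝ} {P Q : Set ℝ²} (hD : 0 < D) (hδ : 0 ≤ δ)
    (hP : ediam P ≤ ENNReal.ofReal δ) (hQ : ediam Q ≤ ENNReal.ofReal δ) :
    volume (slopeCapture D P Q) ≤ ENNReal.ofReal (16 * δ / D) := by
  rcases (slopeCapture D P Q).eq_empty_or_nonempty with h | ⟨u₀, hu₀⟩
  · simp [h]
  calc volume (slopeCapture D P Q) ≤ volume (closedBall u₀ (8 * δ / D)) :=
        measure_mono fun u hu => abs_sub_le_of_mem_slopeCapture hD hδ hP hQ hu hu₀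
    _ = ENNReal.ofReal (16 * δ / D) := by rw [Real.volume_closedBall]; ring_nf

lemma tsum_one_mul_le_tsum {α : Type*} {B : Set α} {g : α → ℝ≥0∞} {c : ℝ≥0∞}
    (h : ∀ a ∈ B, c ≤ g a) : (∑' _ : B, (1 : ℝ≥0∞)) * c ≤ ∑' a, g a :=
  calc (∑' _ : B, (1 : ℝ≥0∞)) * c = ∑' a : B, c := by rw [← ENNReal.tsum_mul_right, one_mul]
    _ ≤ ∑' a : B, g a := ENNReal.tsum_le_tsum fun a => h a a.2
    _ ≤ ∑' a, g a := ENNReal.tsum_comp_le_tsum_of_injective Subtype.val_injective g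

lemma exists_succ_lt_and_le {α : Type*} [LinearOrder α] {f : ℕ → α} {d : α} (h0 : d ≤ f 0)
    (h : ∃ i, f i < d) : ∃ i, f (i + 1) < d ∧ d ≤ f i := by
  by_contra! hne
  obtain ⟨i, hi⟩ := h
  have hle : ∀ i, d ≤ f i := by
    intro i
    induction i with
    | zero => exact h0
    | succ k hk => exact not_lt.1 fun h => (hne k h).not_ge hk
  exact (hi.trans_le (hle i)).false

section Blocks

variable {X : Type*} [PseudoEMetricSpace X] (t : ℕ → Set X) (R : ℕ → ℝ)

def block (i : ℕ) : Set ℕ :=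
  {n | ENNReal.ofReal (R (i + 1)) < ediam (t n) ∧ ediam (t n) ≤ ENNReal.ofReal (R i)}

variable {t R}

lemma tsum_block_mul_rpow_le {s : ℝ} (hs : 0 ≤ s) (ht : ∑' n, ediam (t n) ^ s ≤ 1) (i : ℕ) :
    (∑' _ : block t R i, (1 : ℝ≥0∞)) * ENNReal.ofReal (R (i + 1)) ^ s ≤ 1 :=
  (tsum_one_mul_le_tsum fun _ hn => ENNReal.rpow_le_rpow (le_of_lt hn.1) hs).trans ht

lemma iUnion_subset_union_iUnion_block (hdiam : ∀ n, ediam (t n) ≤ ENNReal.ofReal (R 0))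
    (hR : Tendsto R atTop (𝓝 0)) :
    ⋃ n, t n ⊆ (⋃ n ∈ {n | ediam (t n) = 0}, t n) ∪ ⋃ i, ⋃ n ∈ block t R i, t n := by
  have hR' : Tendsto (fun i => ENNReal.ofReal (R i)) atTop (𝓝 0) := by
    simpa using ENNReal.tendsto_ofReal hR
  refine iUnion_subset fun n => ?_
  rcases eq_or_ne (ediam (t n)) 0 with h | h
  · exact subset_union_of_subset_left (subset_biUnion_of_mem (u := t) h) _
  obtain ⟨i, hi⟩ := exists_succ_lt_and_le (hdiam n)
    (hR'.eventually_lt_const (pos_iff_ne_zero.2 h)).exists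
  exact subset_union_of_subset_right
    (subset_iUnion_of_subset i (subset_biUnion_of_mem (u := t) hi)) _

end Blocks

section BadSlopes

variable (t : ℕ → Set ℝ²) (R D : ℕ → ℝ)

def badSlopes : Set ℝ :=
  ⋃ i, ⋃ n ∈ block t R i, ⋃ m ∈ block t R i, slopeCapture (D i) (t n) (t m)

variable {t R D}

lemma block_volume_le {N : ℝ≥0∞} {a b d s : ℝ} (hN : N * ENNReal.ofReal a ^ s ≤ 1) (ha : 0 ≤ a)
    (hs : 0 ≤ s) (hd : 0 < d) (hb : b ≤ d ^ 2 * a ^ (2 * s)) :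
    N * (N * ENNReal.ofReal (16 * b / d)) ≤ ENNReal.ofReal (16 * d) := by
  have hbd : 16 * b / d ≤ 16 * d * (a ^ s) ^ 2 := by
    rw [div_le_iff₀ hd, ← Real.rpow_natCast, ← Real.rpow_mul ha]
    push_cast
    rw [mul_comm s 2]
    linarith
  calc N * (N * ENNReal.ofReal (16 * b / d))
      ≤ N * (N * ENNReal.ofReal (16 * d * (a ^ s) ^ 2)) := by gcongr
    _ = (N * ENNReal.ofReal a ^ s) ^ 2 * ENNReal.ofReal (16 * d) := by
        rw [ENNReal.ofReal_mul (by positivity), ENNReal.ofReal_pow (by positivity),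
          ENNReal.ofReal_rpow_of_nonneg ha hs]
        ring
    _ ≤ 1 ^ 2 * ENNReal.ofReal (16 * d) := by gcongr
    _ = ENNReal.ofReal (16 * d) := by rw [one_pow, one_mul]

lemma volume_badSlopes_le {s : ℝ} (hs : 0 ≤ s) (ht : ∑' n, ediam (t n) ^ s ≤ 1)
    (hR : ∀ i, 0 < R i) (hD : ∀ i, 0 < D i) (hRD : ∀ i, R i ≤ D i ^ 2 * R (i + 1) ^ (2 * s)) :
    volume (badSlopes t R D) ≤ ∑' i, ENNReal.ofReal (16 * D i) := by
  refine (measure_iUnion_le _).trans (ENNReal.tsum_le_tsum fun i => ?_)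
  set N := ∑' _ : block t R i, (1 : ℝ≥0∞)
  calc volume (⋃ n ∈ block t R i, ⋃ m ∈ block t R i, slopeCapture (D i) (t n) (t m))
      ≤ ∑' n : block t R i, ∑' m : block t R i, volume (slopeCapture (D i) (t n) (t m)) :=
        (measure_biUnion_le _ (to_countable _) _).trans
          (ENNReal.tsum_le_tsum fun _ => measure_biUnion_le _ (to_countable _) _)
    _ ≤ ∑' n : block t R i, ∑' m : block t R i, ENNReal.ofReal (16 * R i / D i) :=
        ENNReal.tsum_le_tsum fun n => ENNReal.tsum_le_tsum fun m =>
          volume_slopeCapture_le (hD i) (hR i).le n.2.2 m.2.2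
    _ = N * (N * ENNReal.ofReal (16 * R i / D i)) := by
        simp only [N, ← ENNReal.tsum_mul_right, one_mul]
    _ ≤ ENNReal.ofReal (16 * D i) :=
        block_volume_le (tsum_block_mul_rpow_le hs ht i) (hR _).le hs (hD i) (hRD i)

lemma mem_badSlopes_of_le_dist {u : ℝ} (hu : u ∈ Icc (-1) 1) {i n m : ℕ} (hn : n ∈ block t R i)
    (hm : m ∈ block t R i) {x y : ℝ²} (hx : x ∈ t n) (hy : y ∈ t m) (hD : 0 < D i)
    (hxy : D i ≤ dist x y) {τ : ℝ} (hτ : y - x = τ • slopeVec u) : u ∈ badSlopes t R D := by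
  simp only [badSlopes, mem_iUnion]
  rcases lt_trichotomy τ 0 with hneg | rfl | hpos
  · refine ⟨i, m, hm, n, hn, hu, y, hy, x, hx, by rwa [dist_comm], -τ, neg_pos.2 hneg, ?_⟩
    rw [neg_smul, ← hτ, neg_sub]
  · rw [zero_smul, sub_eq_zero] at hτ
    subst hτ
    exact absurd (hD.trans_le hxy) (by simp)
  · exact ⟨i, n, hn, m, hm, hu, x, hx, y, hy, hxy, τ, hpos, hτ⟩

lemma ediam_inter_biUnion_block_le {u : ℝ} (hu : u ∈ Icc (-1) 1) (hbad : u ∉ badSlopes t R D)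
    {L : Set ℝ²} (hL : IsAlongSlope u L) {i : ℕ} (hD : 0 < D i) :
    ediam (L ∩ ⋃ n ∈ block t R i, t n) ≤ ENNReal.ofReal (D i) := by
  refine ediam_le fun x hx y hy => ?_
  simp only [mem_inter_iff, mem_iUnion] at hx hy
  obtain ⟨hxL, n, hn, hxn⟩ := hx
  obtain ⟨hyL, m, hm, hym⟩ := hy
  by_contra! hlt
  obtain ⟨τ, hτ⟩ := hL x hxL y hyL
  have hxy : D i ≤ dist x y := by
    rw [edist_dist] at hlt
    exact ((ENNReal.ofReal_lt_ofReal_iff_of_nonneg hD.le).1 hlt).le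
  exact hbad (mem_badSlopes_of_le_dist hu hn hm hxn hym hD hxy hτ)

end BadSlopes

/-- The outer measure `H^𝔥_r`, defined with covers by sets of diameter at most `r`. -/
def genHPre (𝔥 : ℝ → ℝ) (r : ℝ≥0∞) : OuterMeasure ℝ² :=
  OuterMeasure.mkMetric'.pre (fun s => ENNReal.ofReal (𝔥 (ediam s).toReal)) r

lemma genHPre_anti (𝔥 : ℝ → ℝ) {r r' : ℝ≥0∞} (h : r ≤ r') : genHPre 𝔥 r' ≤ genHPre 𝔥 r :=
  OuterMeasure.mkMetric'.mono_pre _ h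

lemma tendsto_genHPre (𝔥 : ℝ → ℝ) (A : Set ℝ²) :
    Tendsto (fun n : ℕ => genHPre 𝔥 (n : ℝ≥0∞)⁻¹ A) atTop (𝓝 (genH 𝔥 A)) := by
  rw [genH, ← OuterMeasure.coe_mkMetric]
  exact OuterMeasure.mkMetric'.tendsto_pre_nat _ A

lemma genHPre_le_tsum_of_notMem_badSlopes {𝔥 : ℝ → ℝ} (hmono : MonotoneOn 𝔥 (Ici 0))
    (h0 : 𝔥 0 = 0) {t : ℕ → Set ℝ²} {R D : ℕ → ℝ} {r : ℝ≥0∞}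
    (hdiam : ∀ n, ediam (t n) ≤ ENNReal.ofReal (R 0)) (hR : Tendsto R atTop (𝓝 0))
    (hD : ∀ i, 0 < D i) (hDr : ∀ i, ENNReal.ofReal (D i) ≤ r) {u : ℝ} (hu : u ∈ Icc (-1) 1)
    (hbad : u ∉ badSlopes t R D) {L : Set ℝ²} (hLt : L ⊆ ⋃ n, t n) (hL : IsAlongSlope u L) :
    genHPre 𝔥 r L ≤ ∑' i, ENNReal.ofReal (𝔥 (D i)) := by
  set W : ℕ → Set ℝ² := fun i => L ∩ ⋃ n ∈ block t R i, t n
  have hW : ∀ i, ediam (W i) ≤ ENNReal.ofReal (D i) := fun i =>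
    ediam_inter_biUnion_block_le hu hbad hL (hD i)
  have hnull : genHPre 𝔥 r (⋃ n ∈ {n | ediam (t n) = 0}, t n) = 0 := by
    refine measure_biUnion_null_iff (to_countable _) |>.2 fun n hn => le_antisymm ?_ bot_le
    calc genHPre 𝔥 r (t n) ≤ ENNReal.ofReal (𝔥 (ediam (t n)).toReal) :=
          OuterMeasure.mkMetric'.pre_le (by rw [show ediam (t n) = 0 from hn]; exact bot_le)
      _ = 0 := by rw [show ediam (t n) = 0 from hn, ENNReal.toReal_zero, h0, ENNReal.ofReal_zero]
  have hLW : L ⊆ (⋃ n ∈ {n | ediam (t n) = 0}, t n) ∪ ⋃ i, W i := fun x hx => by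
    rcases iUnion_subset_union_iUnion_block hdiam hR (hLt hx) with h | h
    · exact Or.inl h
    · obtain ⟨i, hi⟩ := mem_iUnion.1 h
      exact Or.inr (mem_iUnion.2 ⟨i, hx, hi⟩)
  calc genHPre 𝔥 r L ≤ genHPre 𝔥 r (⋃ n ∈ {n | ediam (t n) = 0}, t n) + genHPre 𝔥 r (⋃ i, W i) :=
        (measure_mono hLW).trans (measure_union_le _ _)
    _ ≤ ∑' i, genHPre 𝔥 r (W i) := by rw [hnull, zero_add]; exact measure_iUnion_le _
    _ ≤ ∑' i, ENNReal.ofReal (𝔥 (D i)) := ENNReal.tsum_le_tsum fun i =>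
        (OuterMeasure.mkMetric'.pre_le ((hW i).trans (hDr i))).trans <| ENNReal.ofReal_le_ofReal <|
          hmono ENNReal.toReal_nonneg (hD i).le (ENNReal.toReal_le_of_le_ofReal (hD i).le (hW i))

lemma summable_two_rpow_neg_mul_pow {K γ : ℝ} (hK : 1 < K) (hγ : 0 < γ) :
    Summable fun k : ℕ => (2 : ℝ) ^ (-(γ * K ^ k)) := by
  have hq : (2 : ℝ) ^ (-(γ * (K - 1))) < 1 :=
    Real.rpow_lt_one_of_one_lt_of_neg one_lt_two (by nlinarith)
  refine .of_nonneg_of_le (fun k => by positivity) (fun k => ?_)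
    (summable_geometric_of_lt_one (by positivity) hq)
  rw [← Real.rpow_natCast (2 ^ _ : ℝ), ← Real.rpow_mul (by norm_num : (0 : ℝ) ≤ 2)]
  refine Real.rpow_le_rpow_of_exponent_le one_le_two ?_
  have := one_add_mul_le_pow (by linarith : (-2 : ℝ) ≤ K - 1) k
  rw [add_sub_cancel] at this
  nlinarith

lemma two_rpow_neg_pow_eq {s K γ : ℝ} (hexp : 2 * γ + 2 * s * K = 1) (k : ℕ) :
    (2 : ℝ) ^ (-K ^ k) = ((2 : ℝ) ^ (-(γ * K ^ k))) ^ 2 * ((2 : ℝ) ^ (-K ^ (k + 1))) ^ (2 * s) := by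
  have h2 : (0 : ℝ) ≤ 2 := by norm_num
  rw [← Real.rpow_natCast (2 ^ _ : ℝ) 2, ← Real.rpow_mul h2, ← Real.rpow_mul h2,
    ← Real.rpow_add two_pos, pow_succ]
  refine congrArg ((2 : ℝ) ^ ·) ?_
  push_cast
  linear_combination K ^ k * hexp

lemma log_one_div_two_rpow_neg_mul_pow_rpow {K γ : ℝ} (θ : ℝ) (hK : 0 < K) (hγ : 0 < γ) (k : ℕ) :
    Real.log (1 / (2 : ℝ) ^ (-(γ * K ^ k))) ^ (-θ) = (γ * Real.log 2) ^ (-θ) * (K ^ (-θ)) ^ k := by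
  rw [Real.rpow_neg zero_le_two, one_div, inv_inv, Real.log_rpow two_pos, mul_right_comm,
    Real.mul_rpow (by positivity) (by positivity), ← Real.rpow_natCast K,
    ← Real.rpow_natCast (K ^ (-θ)), ← Real.rpow_mul hK.le, ← Real.rpow_mul hK.le, mul_comm (k : ℝ)]

lemma exists_scales {s θ ρ η : ℝ} (hs0 : 0 < s) (hs : s < 1 / 2) (hθ : 0 < θ) (hρ : 0 < ρ)
    (hη : 0 < η) :
    ∃ R D : ℕ → ℝ, (∀ i, 0 < R i) ∧ (∀ i, 0 < D i) ∧
      (∀ i, R i ≤ D i ^ 2 * R (i + 1) ^ (2 * s)) ∧ Tendsto R atTop (𝓝 0) ∧ (∀ i, D i < ρ) ∧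
      ∑' i, ENNReal.ofReal (16 * D i) < 1 ∧
      ∑' i, ENNReal.ofReal (Real.log (1 / D i) ^ (-θ)) < ENNReal.ofReal η := by
  -- `R i = 2 ^ (-K ^ (i + j))` and `D i = R i ^ γ`
  obtain ⟨K, γ, hK, hγ, hγ1, hexp⟩ : ∃ K γ : ℝ, 1 < K ∧ 0 < γ ∧ γ ≤ 1 ∧ 2 * γ + 2 * s * K = 1 :=
    ⟨(2 * s + 1) / (4 * s), (1 - 2 * s) / 4, by rw [lt_div_iff₀ (by positivity)]; linarith,
      by linarith, by linarith, by field_simp; ring⟩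
  set Rb : ℕ → ℝ := fun k => 2 ^ (-K ^ k)
  set Db : ℕ → ℝ := fun k => 2 ^ (-(γ * K ^ k))
  have hRD : ∀ k, Rb k ≤ Db k ^ 2 * Rb (k + 1) ^ (2 * s) := fun k =>
    (two_rpow_neg_pow_eq hexp k).le
  have hRbD : ∀ k, Rb k ≤ Db k := fun k =>
    Real.rpow_le_rpow_of_exponent_le one_le_two (by nlinarith [pow_pos (zero_lt_one.trans hK) k])
  have hsumD : Summable Db := summable_two_rpow_neg_mul_pow hK hγ
  have hlog : ∀ k, Real.log (1 / Db k) ^ (-θ) = (γ * Real.log 2) ^ (-θ) * (K ^ (-θ)) ^ k :=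
    log_one_div_two_rpow_neg_mul_pow_rpow θ (zero_lt_one.trans hK) hγ
  have hsumL : Summable fun k => Real.log (1 / Db k) ^ (-θ) := by
    simp only [hlog]
    exact (summable_geometric_of_lt_one (by positivity)
      (Real.rpow_lt_one_of_one_lt_of_neg hK (by linarith))).mul_left _
  have hρ16 : 0 < min ρ (1 / 16) := lt_min hρ (by norm_num)
  obtain ⟨j, hjD, hjL⟩ : ∃ j, ∑' k, Db (k + j) < min ρ (1 / 16) ∧
      ∑' k, Real.log (1 / Db (k + j)) ^ (-θ) < η :=
    (((tendsto_sum_nat_add Db).eventually_lt_const hρ16).and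
      ((tendsto_sum_nat_add fun k => Real.log (1 / Db k) ^ (-θ)).eventually_lt_const hη)).exists
  have hsumDj := (summable_nat_add_iff j).2 hsumD
  refine ⟨fun i => Rb (i + j), fun i => Db (i + j), fun i => Real.rpow_pos_of_pos two_pos _,
    fun i => Real.rpow_pos_of_pos two_pos _,
    fun i => by simpa only [add_right_comm i 1 j] using hRD (i + j), ?_, fun i => ?_, ?_, ?_⟩
  · exact squeeze_zero (fun i => by positivity) (fun i => hRbD (i + j))
      hsumDj.tendsto_atTop_zero
  · exact (hsumDj.le_tsum i fun k _ => by positivity).trans_lt (hjD.trans_le (min_le_left _ _))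
  · rw [← ENNReal.ofReal_tsum_of_nonneg (fun i => by positivity) (hsumDj.mul_left 16),
      hsumDj.tsum_mul_left, ENNReal.ofReal_lt_one]
    linarith [min_le_right ρ (1 / 16)]
  · rw [← ENNReal.ofReal_tsum_of_nonneg (fun i => by rw [hlog]; positivity)
      ((summable_nat_add_iff j).2 hsumL)]
    exact (ENNReal.ofReal_lt_ofReal_iff hη).2 hjL

lemma exists_cover_of_hausdorffMeasure_eq_zero {X : Type*} [EMetricSpace X] [MeasurableSpace X]
    [BorelSpace X] {s : ℝ} (hs : 0 < s) {E : Set X} (hE : μH[s] E = 0) {r c : ℝ≥0∞} (hr : 0 < r)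
    (hc : 0 < c) :
    ∃ t : ℕ → Set X, E ⊆ ⋃ n, t n ∧ (∀ n, ediam (t n) ≤ r) ∧ ∑' n, ediam (t n) ^ s < c := by
  have hlt : ⨅ (t : ℕ → Set X) (_ : E ⊆ ⋃ n, t n) (_ : ∀ n, ediam (t n) ≤ r),
      ∑' n, ⨆ _ : (t n).Nonempty, ediam (t n) ^ s < c := calc
    _ ≤ μH[s] E := by rw [Measure.hausdorffMeasure_apply]; exact le_iSup₂_of_le r hr le_rfl
    _ < c := hE ▸ hc
  simp only [iInf_lt_iff] at hlt
  obtain ⟨t, hEt, htr, hsum⟩ := hlt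
  refine ⟨t, hEt, htr, lt_of_le_of_lt (ENNReal.tsum_le_tsum fun n => ?_) hsum⟩
  rcases (t n).eq_empty_or_nonempty with h | h
  · simp [h, ENNReal.zero_rpow_of_pos hs]
  · rw [iSup_pos h]

lemma exists_volume_lt_one_genHPre_lt {𝔥 : ℝ → ℝ} (hmono : MonotoneOn 𝔥 (Ici 0)) (h0 : 𝔥 0 = 0)
    {θ ε : ℝ} (hθ : 0 < θ) (hε : 0 < ε)
    (hform : ∀ x : ℝ, 0 < x → x < ε → 𝔥 x = Real.log (1 / x) ^ (-θ)) {s : ℝ} (hs0 : 0 < s)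
    (hs : s < 1 / 2) {E : Set ℝ²} (hE : μH[s] E = 0) {r η : ℝ≥0∞} (hr : 0 < r) (hη : 0 < η) :
    ∃ B : Set ℝ, volume B < 1 ∧
      ∀ u ∈ Icc (-1 : ℝ) 1, u ∉ B → ∀ L ⊆ E, IsAlongSlope u L → genHPre 𝔥 r L < η := by
  obtain ⟨ρ, -, hρ, hρr⟩ := ENNReal.lt_iff_exists_real_btwn.1 hr
  obtain ⟨η₀, -, hη₀, hη₀η⟩ := ENNReal.lt_iff_exists_real_btwn.1 hη
  obtain ⟨R, D, hR, hD, hRD, hRlim, hDρ, hDsum, hlogsum⟩ :=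
    exists_scales hs0 hs hθ (lt_min (ENNReal.ofReal_pos.1 hρ) hε) (ENNReal.ofReal_pos.1 hη₀)
  obtain ⟨t, hEt, htdiam, htsum⟩ :=
    exists_cover_of_hausdorffMeasure_eq_zero hs0 hE (ENNReal.ofReal_pos.2 (hR 0)) one_pos
  have hDr : ∀ i, ENNReal.ofReal (D i) ≤ r := fun i =>
    (ENNReal.ofReal_le_ofReal ((hDρ i).le.trans (min_le_left _ _))).trans hρr.le
  refine ⟨badSlopes t R D, (volume_badSlopes_le hs0.le htsum.le hR hD hRD).trans_lt hDsum,
    fun u hu hbad L hLE hL => ?_⟩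
  calc genHPre 𝔥 r L ≤ ∑' i, ENNReal.ofReal (𝔥 (D i)) :=
        genHPre_le_tsum_of_notMem_badSlopes hmono h0 htdiam hRlim hD hDr hu hbad (hLE.trans hEt) hL
    _ = ∑' i, ENNReal.ofReal (Real.log (1 / D i) ^ (-θ)) := by
        simp only [hform _ (hD _) ((hDρ _).trans_le (min_le_right _ _))]
    _ < η := hlogsum.trans hη₀η

lemma exists_lt_measure_of_subset_iUnion {α : Type*} [MeasurableSpace α] {μ : Measure α}
    {T : ℕ → Set α} (hT : Monotone T) {A : Set α} (hA : A ⊆ ⋃ N, T N) {c : ℝ≥0∞}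
    (hc : c < μ A) : ∃ N, c < μ (T N) :=
  lt_iSup_iff.1 (hT.measure_iUnion ▸ hc.trans_le (measure_mono hA))

lemma exists_one_lt_volume_genHPre {𝔥 : ℝ → ℝ} {S : ℝ → Set ℝ²} (hS : ∀ u, 0 < genH 𝔥 (S u)) :
    ∃ N : ℕ, 1 < volume {u ∈ Icc (-1 : ℝ) 1 | (N : ℝ≥0∞)⁻¹ < genHPre 𝔥 (N : ℝ≥0∞)⁻¹ (S u)} := by
  refine exists_lt_measure_of_subset_iUnion ?_ (fun u hu => ?_)
    (show (1 : ℝ≥0∞) < volume (Icc (-1 : ℝ) 1) by rw [Real.volume_Icc]; norm_num)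
  · intro M N hMN u ⟨hu, hlt⟩
    have hinv : (N : ℝ≥0∞)⁻¹ ≤ (M : ℝ≥0∞)⁻¹ := ENNReal.inv_le_inv.2 (by exact_mod_cast hMN)
    exact ⟨hu, hinv.trans_lt (hlt.trans_le (genHPre_anti 𝔥 hinv _))⟩
  · exact mem_iUnion.2 <| (ENNReal.tendsto_inv_nat_nhds_zero.eventually_lt
      (tendsto_genHPre 𝔥 (S u)) (hS u)).exists.imp fun _ hN => ⟨hu, hN⟩

end Furstenberg

open Furstenberg

theorem stmt5 (θ : ℝ) (hθ : 0 < θ) (𝔥 : ℝ → ℝ) (h𝔥 : IsDimFun 𝔥)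
    (hform : ∃ ε > (0:ℝ), ∀ x : ℝ, 0 < x → x < ε → 𝔥 x = Real.log (1 / x) ^ (-θ))
    (E : Set (EuclideanSpace ℝ (Fin 2))) (hE : IsFurstenberg 𝔥 E) :
    (1 / 2 : ENNReal) ≤ dimH E := by
  obtain ⟨hmono, -, h0, -⟩ := h𝔥
  obtain ⟨ε, hε, hform⟩ := hform
  by_contra! hdim
  obtain ⟨s, hEs, hs⟩ := ENNReal.lt_iff_exists_nnreal_btwn.1 hdim
  have hs0 : (0 : ℝ) < s := NNReal.coe_pos.2 (ENNReal.coe_pos.1 (pos_of_gt hEs))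
  have hs2 : (s : ℝ) < 1 / 2 := by simpa using ENNReal.toReal_strict_mono (by norm_num) hs
  choose p hp using fun u => hE (unitSlopeVec u) (norm_unitSlopeVec u)
  obtain ⟨N, hN⟩ := exists_one_lt_volume_genHPre hp
  have hNpos : 0 < (N : ℝ≥0∞)⁻¹ := ENNReal.inv_pos.2 (ENNReal.natCast_ne_top N)
  obtain ⟨B, hB, hsmall⟩ := exists_volume_lt_one_genHPre_lt hmono h0 hθ hε hform hs0 hs2
    (hausdorffMeasure_of_dimH_lt hEs) hNpos hNpos
  obtain ⟨u, ⟨hu, huN⟩, huBad⟩ := not_subset.1 fun h => (hB.trans hN).not_ge (measure_mono h)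
  exact (hsmall u hu huBad _ inter_subset_right
    ((isAlongSlope_segment u _ (p u)).mono inter_subset_left)).not_gt huN
end
end

section
/- There exists a constant C > 0 such that for every integer n ≥ 2 and every real number x ∈ [0,1], there are integers j, k with 0 ≤ j ≤ n−1 and 0 ≤ k ≤ n−1 such that | x − ( √2·(k/n) − j/n ) | ≤ C·log(n)/n². -/
open Real

private def PQ : ℕ → ℕ × ℕ
  | 0 => (1, 1)
  | t + 1 => (3 * (PQ t).1 + 4 * (PQ t).2, 2 * (PQ t).1 + 3 * (PQ t).2)

private def sP (t : ℕ) : ℕ := (PQ t).1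
private def sQ (t : ℕ) : ℕ := (PQ t).2

private lemma sP_zero : sP 0 = 1 := rfl
private lemma sQ_zero : sQ 0 = 1 := rfl
private lemma sP_succ (t : ℕ) : sP (t + 1) = 3 * sP t + 4 * sQ t := rfl
private lemma sQ_succ (t : ℕ) : sQ (t + 1) = 2 * sP t + 3 * sQ t := rfl

private lemma sQ_pos (t : ℕ) : 1 ≤ sQ t := by
  induction t with
  | zero => exact le_refl 1
  | succ t ih => rw [sQ_succ]; omega

private lemma sP_ge (t : ℕ) : sQ t ≤ sP t := by
  induction t with
  | zero => exact le_refl 1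
  | succ t ih => rw [sP_succ, sQ_succ]; omega

private lemma sP_le (t : ℕ) : sP t ≤ 2 * sQ t := by
  induction t with
  | zero => norm_num [sP_zero, sQ_zero]
  | succ t ih => rw [sP_succ, sQ_succ]; omega

private lemma sQ_growth (t : ℕ) : 5 * sQ t ≤ sQ (t + 1) := by
  have := sP_ge t; rw [sQ_succ]; omega

private lemma sQ_le7 (t : ℕ) : sQ (t + 1) ≤ 7 * sQ t := by
  have := sP_le t; rw [sQ_succ]; omega

private lemma sQ_gt (t : ℕ) : t + 1 ≤ sQ t := by
  induction t with
  | zero => exact le_refl 1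
  | succ t ih => have h1 := sQ_growth t; have h2 := sQ_pos t; omega

private lemma pell (t : ℕ) : 2 * (sQ t : ℤ) ^ 2 = (sP t : ℤ) ^ 2 + 1 := by
  induction t with
  | zero => norm_num [sP_zero, sQ_zero]
  | succ t ih =>
      rw [sP_succ, sQ_succ]
      push_cast
      linear_combination ih
private lemma s2sq : Real.sqrt 2 ^ 2 = 2 := Real.sq_sqrt (by norm_num)

private lemma s2lb : 1.4142 ≤ Real.sqrt 2 := by
  nlinarith [s2sq, Real.sqrt_nonneg 2]

private lemma s2ub : Real.sqrt 2 ≤ 1.41422 := by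
  nlinarith [s2sq, Real.sqrt_nonneg 2]

private lemma pellR (t : ℕ) : 2 * (sQ t : ℝ) ^ 2 = (sP t : ℝ) ^ 2 + 1 := by
  exact_mod_cast pell t

private lemma d_pos (t : ℕ) : 0 < Real.sqrt 2 * (sQ t : ℝ) - (sP t : ℝ) := by
  have h := pellR t
  have h1 : (1:ℝ) ≤ (sQ t : ℝ) := by exact_mod_cast sQ_pos t
  have h2 : (0:ℝ) ≤ (sP t : ℝ) := Nat.cast_nonneg _
  by_contra hcon
  push_neg at hcon
  have hs : (0:ℝ) ≤ Real.sqrt 2 := Real.sqrt_nonneg 2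
  nlinarith [mul_nonneg (by linarith : (0:ℝ) ≤ (sP t : ℝ) - Real.sqrt 2 * (sQ t : ℝ))
    (by nlinarith : (0:ℝ) ≤ (sP t : ℝ) + Real.sqrt 2 * (sQ t : ℝ)), s2sq]

private lemma d_one (t : ℕ) :
    (Real.sqrt 2 * (sQ t : ℝ) - (sP t : ℝ)) * (Real.sqrt 2 * (sQ t : ℝ) + (sP t : ℝ)) = 1 := by
  have h := pellR t
  linear_combination (sQ t : ℝ) ^ 2 * s2sq + h

private lemma d_le (t : ℕ) :
    (Real.sqrt 2 * (sQ t : ℝ) - (sP t : ℝ)) * (2 * (sQ t : ℝ)) ≤ 1 := by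
  have hone := d_one t
  have hd := d_pos t
  have h1 : (1:ℝ) ≤ (sQ t : ℝ) := by exact_mod_cast sQ_pos t
  have hPQ : (sQ t : ℝ) ≤ (sP t : ℝ) := by exact_mod_cast sP_ge t
  have hs := s2lb
  have key : (0:ℝ) ≤ (Real.sqrt 2 * (sQ t : ℝ) - (sP t : ℝ)) *
      ((Real.sqrt 2 * (sQ t : ℝ) + (sP t : ℝ)) - 2 * (sQ t : ℝ)) := by
    apply mul_nonneg hd.le
    nlinarith
  nlinarith [key, hone]

private lemma d_ratio (t : ℕ) :
    Real.sqrt 2 * (sQ t : ℝ) - (sP t : ℝ) ≤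
      6 * (Real.sqrt 2 * (sQ (t+1) : ℝ) - (sP (t+1) : ℝ)) := by
  have k1 := d_one t
  have k2 := d_one (t+1)
  have hd := d_pos t
  have hd' := d_pos (t+1)
  have hQ0 : (0:ℝ) ≤ (sQ t : ℝ) := Nat.cast_nonneg _
  have hP0 : (0:ℝ) ≤ (sP t : ℝ) := Nat.cast_nonneg _
  have ha : (Real.sqrt 2 * (sQ (t+1) : ℝ) + (sP (t+1) : ℝ)) ≤
      6 * (Real.sqrt 2 * (sQ t : ℝ) + (sP t : ℝ)) := by
    rw [sQ_succ, sP_succ]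
    push_cast
    nlinarith [mul_nonneg (by nlinarith [s2ub] : (0:ℝ) ≤ 3 - 2 * Real.sqrt 2) hP0,
      mul_nonneg (by nlinarith [s2lb] : (0:ℝ) ≤ 3 * Real.sqrt 2 - 4) hQ0]
  have key : (Real.sqrt 2 * (sQ t : ℝ) - (sP t : ℝ)) *
      (Real.sqrt 2 * (sQ (t+1) : ℝ) - (sP (t+1) : ℝ)) *
      (6 * (Real.sqrt 2 * (sQ t : ℝ) + (sP t : ℝ)) -
        (Real.sqrt 2 * (sQ (t+1) : ℝ) + (sP (t+1) : ℝ))) =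
      6 * (Real.sqrt 2 * (sQ (t+1) : ℝ) - (sP (t+1) : ℝ)) -
        (Real.sqrt 2 * (sQ t : ℝ) - (sP t : ℝ)) := by
    linear_combination (6 * (Real.sqrt 2 * (sQ (t+1) : ℝ) - (sP (t+1) : ℝ))) * k1 -
      (Real.sqrt 2 * (sQ t : ℝ) - (sP t : ℝ)) * k2
  have hnn : (0:ℝ) ≤ (Real.sqrt 2 * (sQ t : ℝ) - (sP t : ℝ)) *
      (Real.sqrt 2 * (sQ (t+1) : ℝ) - (sP (t+1) : ℝ)) *
      (6 * (Real.sqrt 2 * (sQ t : ℝ) + (sP t : ℝ)) -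
        (Real.sqrt 2 * (sQ (t+1) : ℝ) + (sP (t+1) : ℝ))) := by
    apply mul_nonneg (mul_nonneg hd.le hd'.le)
    linarith
  linarith [key ▸ hnn]
private lemma greedy (t : ℕ) : ∀ u : ℝ, 0 ≤ u → u ≤ 1 →
    ∃ k j : ℕ, k ≤ 9 * sQ t ∧ j ≤ 18 * sQ t ∧
      0 ≤ u - (Real.sqrt 2 * k - j) ∧
      u - (Real.sqrt 2 * k - j) ≤ Real.sqrt 2 * (sQ t : ℝ) - (sP t : ℝ) := by
  induction t with
  | zero =>
      intro u hu0 hu1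
      have hd : (0:ℝ) < Real.sqrt 2 - 1 := by nlinarith [s2lb]
      set c : ℕ := ⌊u / (Real.sqrt 2 - 1)⌋₊ with hc
      have hdle : u / (Real.sqrt 2 - 1) ≤ 2.5 := by
        rw [div_le_iff₀ hd]
        nlinarith [s2lb]
      have hc2 : c ≤ 2 := by
        have h := Nat.floor_mono hdle
        have : ⌊(2.5:ℝ)⌋₊ = 2 := by
          rw [Nat.floor_eq_iff (by norm_num)] <;> norm_num
        omega
      have hfl : (c : ℝ) ≤ u / (Real.sqrt 2 - 1) := Nat.floor_le (by positivity)
      have hfu : u / (Real.sqrt 2 - 1) < (c : ℝ) + 1 := Nat.lt_floor_add_one _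
      have hlow : (c : ℝ) * (Real.sqrt 2 - 1) ≤ u := by
        rw [← le_div_iff₀ hd]; exact hfl
      have hhigh : u < ((c : ℝ) + 1) * (Real.sqrt 2 - 1) := by
        rw [← div_lt_iff₀ hd]; exact hfu
      refine ⟨c, c, ?_, ?_, ?_, ?_⟩
      · rw [sQ_zero]; omega
      · rw [sQ_zero]; omega
      · have : Real.sqrt 2 * (c : ℝ) - (c : ℝ) = (c : ℝ) * (Real.sqrt 2 - 1) := by ring
        rw [this]; linarith
      · rw [sQ_zero, sP_zero]
        push_cast
        nlinarith [hhigh]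
  | succ t ih =>
      intro u hu0 hu1
      obtain ⟨k, j, hk, hj, hr0, hr1⟩ := ih u hu0 hu1
      have hd0 : 0 < Real.sqrt 2 * (sQ (t+1) : ℝ) - (sP (t+1) : ℝ) := d_pos (t+1)
      have hratio := d_ratio t
      set d : ℝ := Real.sqrt 2 * (sQ (t+1) : ℝ) - (sP (t+1) : ℝ) with hddef
      set r : ℝ := u - (Real.sqrt 2 * k - j) with hrdef
      set c : ℕ := ⌊r / d⌋₊ with hc
      have hrd6 : r / d ≤ 6 := by
        rw [div_le_iff₀ hd0]; linarith
      have hc6 : c ≤ 6 := by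
        have h := Nat.floor_mono hrd6
        have : ⌊(6:ℝ)⌋₊ = 6 := Nat.floor_ofNat 6
        omega
      have hfl : (c : ℝ) ≤ r / d := Nat.floor_le (div_nonneg hr0 hd0.le)
      have hfu : r / d < (c : ℝ) + 1 := Nat.lt_floor_add_one _
      have hlow : (c : ℝ) * d ≤ r := by rw [← le_div_iff₀ hd0]; exact hfl
      have hhigh : r < ((c : ℝ) + 1) * d := by rw [← div_lt_iff₀ hd0]; exact hfu
      have hkey : u - (Real.sqrt 2 * ((k + c * sQ (t+1) : ℕ) : ℝ) - ((j + c * sP (t+1) : ℕ) : ℝ))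
          = r - (c : ℝ) * d := by
        rw [hrdef, hddef]; push_cast; ring
      refine ⟨k + c * sQ (t+1), j + c * sP (t+1), ?_, ?_, ?_, ?_⟩
      · have h5 := sQ_growth t
        have hm : c * sQ (t+1) ≤ 6 * sQ (t+1) := Nat.mul_le_mul_right _ hc6
        omega
      · have h5 := sQ_growth t
        have hm : c * sP (t+1) ≤ 6 * sP (t+1) := Nat.mul_le_mul_right _ hc6
        have hp := sP_le (t+1)
        omega
      · rw [hkey]; linarith
      · rw [hkey]; linarith
private lemma exists_level (N : ℕ) (hN : 1 ≤ N) : ∃ t, sQ t ≤ N ∧ N < sQ (t + 1) := by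
  classical
  set T := Nat.findGreatest (fun t => sQ t ≤ N) N with hT
  have h0 : sQ 0 ≤ N := by rw [sQ_zero]; exact hN
  have hspec : sQ T ≤ N :=
    Nat.findGreatest_spec (P := fun t => sQ t ≤ N) (Nat.zero_le N) h0
  have hTN : T < N := by
    have := sQ_gt T
    omega
  have hnot : ¬ sQ (T + 1) ≤ N :=
    Nat.findGreatest_is_greatest (P := fun t => sQ t ≤ N) (n := N) (k := T + 1) (by omega) (by omega)
  exact ⟨T, hspec, by omega⟩

set_option maxHeartbeats 1000000 in
theorem stmt17 :
    ∃ C : ℝ, 0 < C ∧ ∀ n : ℕ, 2 ≤ n → ∀ x ∈ Set.Icc (0:ℝ) 1,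
      ∃ j k : ℕ, j ≤ n - 1 ∧ k ≤ n - 1 ∧
        |x - (Real.sqrt 2 * ((k : ℝ) / n) - (j : ℝ) / n)| ≤ C * Real.log n / n ^ 2 := by
  refine ⟨10000, by norm_num, ?_⟩
  intro n hn x hx
  obtain ⟨hx0, hx1⟩ := hx
  have hn0 : (0:ℝ) < n := by positivity
  have hn2 : (2:ℝ) ≤ n := by exact_mod_cast hn
  have hlog : (0.693:ℝ) ≤ Real.log n := by
    have h2 : Real.log 2 ≤ Real.log n := Real.log_le_log (by norm_num) hn2
    have := Real.log_two_gt_d9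
    linarith
  by_cases hsmall : n ≤ 59
  · refine ⟨0, 0, Nat.zero_le _, Nat.zero_le _, ?_⟩
    have hn59 : (n:ℝ) ≤ 59 := by exact_mod_cast hsmall
    simp only [Nat.cast_zero, zero_div, mul_zero, sub_zero]
    rw [abs_of_nonneg hx0]
    have h1 : (1:ℝ) ≤ 10000 * Real.log n / n ^ 2 := by
      rw [le_div_iff₀ (by positivity)]
      nlinarith
    linarith
  · push_neg at hsmall
    have hn60 : 60 ≤ n := hsmall
    have hn60R : (60:ℝ) ≤ n := by exact_mod_cast hn60
    set N := n / 35 with hN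
    have hN1 : 1 ≤ N := by rw [hN]; omega
    obtain ⟨t, ht1, ht2⟩ := exists_level N hN1
    have h35N : 35 * N ≤ n := by omega
    have hQn : n ≤ 245 * sQ t := by
      have h7 := sQ_le7 t
      omega
    have hs0 : (0:ℝ) < Real.sqrt 2 := by nlinarith [s2lb]
    set kb : ℕ := ⌈(n:ℝ) * x / Real.sqrt 2⌉₊ with hkb
    have hceil1 : (n:ℝ) * x / Real.sqrt 2 ≤ (kb:ℝ) := Nat.le_ceil _
    have hceil2 : (kb:ℝ) < (n:ℝ) * x / Real.sqrt 2 + 1 :=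
      Nat.ceil_lt_add_one (by positivity)
    have hcancel : Real.sqrt 2 * ((n:ℝ) * x / Real.sqrt 2) = (n:ℝ) * x := by
      field_simp
    set w : ℝ := Real.sqrt 2 * (kb:ℝ) - (n:ℝ) * x with hw
    have hw0 : 0 ≤ w := by
      have h := mul_le_mul_of_nonneg_left hceil1 hs0.le
      rw [hcancel] at h
      rw [hw]; linarith
    have hwub : w < Real.sqrt 2 := by
      have h := mul_lt_mul_of_pos_left hceil2 hs0
      rw [mul_add, hcancel, mul_one] at h
      rw [hw]; linarith
    set m : ℕ := ⌈w⌉₊ with hm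
    have hm2 : m ≤ 2 := by
      rw [hm]
      exact Nat.ceil_le.mpr (by push_cast; nlinarith [s2ub])
    set u : ℝ := (m:ℝ) - w with hu
    have hu0 : 0 ≤ u := by
      rw [hu]; linarith [Nat.le_ceil w]
    have hu1 : u ≤ 1 := by
      rw [hu]; linarith [Nat.ceil_lt_add_one hw0]
    obtain ⟨kf, jf, hkf, hjf, hg0, hg1⟩ := greedy t u hu0 hu1
    refine ⟨jf + m, kb + kf, ?_, ?_, ?_⟩
    · -- j bound
      have hst : sQ t ≤ N := ht1
      omega
    · -- k bound
      have hx2 : (n:ℝ) * x ≤ n := by nlinarith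
      have hdivb : (n:ℝ) * x / Real.sqrt 2 ≤ 0.70712 * n := by
        rw [div_le_iff₀ hs0]
        nlinarith [hx2, mul_nonneg hn0.le (by nlinarith [s2lb] : (0:ℝ) ≤ Real.sqrt 2 - 1.4142)]
      have hkfn : (kf:ℝ) ≤ 9 * (n:ℝ) / 35 := by
        have h1 : (kf:ℝ) ≤ 9 * (sQ t:ℝ) := by exact_mod_cast hkf
        have h2 : (sQ t:ℝ) ≤ (N:ℝ) := by exact_mod_cast ht1
        have h3 : 35 * (N:ℝ) ≤ (n:ℝ) := by exact_mod_cast h35N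
        linarith
      have hkR : ((kb:ℝ) + (kf:ℝ)) < (n:ℝ) := by linarith
      have hkn : kb + kf < n := by exact_mod_cast (by push_cast; exact hkR : ((kb + kf : ℕ):ℝ) < (n:ℝ))
      omega
    · have hval : x - (Real.sqrt 2 * (((kb + kf : ℕ):ℝ)/(n:ℝ)) - ((jf + m : ℕ):ℝ)/(n:ℝ))
          = (u - (Real.sqrt 2 * (kf:ℝ) - (jf:ℝ))) / n := by
        rw [hu, hw]
        push_cast
        field_simp
        ring
      rw [hval, abs_div, abs_of_nonneg hg0, abs_of_nonneg hn0.le]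
      have hD2Q := d_le t
      have hDpos := d_pos t
      have hQtR : (n:ℝ) ≤ 245 * (sQ t:ℝ) := by exact_mod_cast hQn
      have hq0 : (0:ℝ) ≤ 2 * (sQ t:ℝ) := by positivity
      have hrn : (u - (Real.sqrt 2 * (kf:ℝ) - (jf:ℝ))) * (2 * (n:ℝ)) ≤ 245 := by
        nlinarith [mul_le_mul_of_nonneg_right hg1 hq0,
          mul_le_mul_of_nonneg_left hQtR hg0, hD2Q]
      rw [div_le_div_iff₀ hn0 (by positivity)]
      nlinarith [mul_le_mul_of_nonneg_right hrn hn0.le,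
        mul_le_mul_of_nonneg_right hlog hn0.le, hg0, hn60R]
end

section
/- There exists a constant c > 0 such that the following holds. Let 𝔥 be a dimension function, let δ > 0, let I ⊆ ℝ be an interval, let E ⊆ I, and let η > 0 be such that 𝔥⁻¹(η/8) < δ and H^𝔥_δ(E) ≥ η, where 𝔥⁻¹(y) = inf{ x > 0 : 𝔥(x) ≥ y }. Then there exist two subintervals I⁻ and I⁺ of I such that the distance between I⁻ and I⁺ is at least 𝔥⁻¹(η/8), and H^𝔥_δ(I⁻ ∩ E) ≥ c·η and H^𝔥_δ(I⁺ ∩ E) ≥ c·η. -/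
open MeasureTheory Set

/-- The `δ`-premeasure `H^h_δ` on `ℝ` associated with a dimension function `h`. -/
noncomputable def preH (h : ℝ → ℝ) (δ : ℝ) (E : Set ℝ) : ENNReal :=
  ⨅ (t : ℕ → Set ℝ) (_ : E ⊆ ⋃ i, t i)
    (_ : ∀ i, EMetric.diam (t i) < ENNReal.ofReal δ),
    ∑' i, ENNReal.ofReal (h (EMetric.diam (t i)).toReal)

/-- The generalized inverse `𝔥⁻¹ y = inf { x > 0 : 𝔥 x ≥ y }`. -/
noncomputable def dimInv (𝔥 : ℝ → ℝ) (y : ℝ) : ℝ := sInf {x : ℝ | 0 < x ∧ y ≤ 𝔥 x}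

/-! With `r = 𝔥⁻¹(η/8)`, continuity of `𝔥` gives `s ∈ (r, δ)` with `𝔥 s < η/2`, so the part of
`E` in any interval of length `s` has premeasure below `η/2`. Take `c = 1/4` and call a cut point
`m` good when `E ∩ (-∞, m]` has premeasure `≥ η/4`. If no good `m` also had a heavy tail
`E ∩ [m + r, ∞)`, take the infimum `u` of the good points and a good `m` just above it: then `E` is
covered by the light tails `E ∩ (-∞, u - ε]`, `E ∩ [m + r, ∞)` and an interval of length `s`, so
`H^𝔥_δ(E) < η`. Good points exist because `H^𝔥_δ` is additive on `δ`-separated sets: cutting `ℝ`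
into blocks of length `δ`, the even blocks are pairwise `δ`-apart and so are the odd ones, whence
`H^𝔥_δ(E)` is at most twice the supremum of `H^𝔥_δ` over the bounded parts of `E`. -/

open scoped ENNReal Topology

section DimInv

variable {𝔥 : ℝ → ℝ} {y : ℝ}

theorem apply_dimInv_le (hcont : ContinuousOn 𝔥 (Ici 0)) (hpos : 0 < dimInv 𝔥 y) :
    𝔥 (dimInv 𝔥 y) ≤ y := by
  set r := dimInv 𝔥 y
  have hbelow : ∀ x ∈ Ioo 0 r, 𝔥 x ≤ y := fun x hx => by
    by_contra! h
    exact (csInf_le ⟨0, fun _ hz => hz.1.le⟩ ⟨hx.1, h.le⟩ : r ≤ x).not_gt hx.2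
  have : (𝓝[Ioo 0 r] r).NeBot := by rw [nhdsWithin_Ioo_eq_nhdsLT hpos]; infer_instance
  exact le_of_tendsto ((hcont r hpos.le).mono (Ioo_subset_Ioi_self.trans Ioi_subset_Ici_self))
    (eventually_nhdsWithin_of_forall hbelow)

theorem exists_dimInv_lt_lt_and_apply_lt (hcont : ContinuousOn 𝔥 (Ici 0)) (h0 : 𝔥 0 = 0)
    {δ z : ℝ} (hδ : 0 < δ) (hrδ : dimInv 𝔥 y < δ) (hy : 0 ≤ y) (hyz : y < z) :
    ∃ s, 0 < s ∧ dimInv 𝔥 y < s ∧ s < δ ∧ 𝔥 s < z := by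
  set p := max (dimInv 𝔥 y) 0
  have hp : 𝔥 p < z := by
    rcases le_or_gt (dimInv 𝔥 y) 0 with h | h
    · simpa [p, max_eq_right h, h0] using hy.trans_lt hyz
    · simp only [p, max_eq_left h.le]; exact (apply_dimInv_le hcont h).trans_lt hyz
  have hlim : Filter.Tendsto 𝔥 (𝓝[>] p) (𝓝 (𝔥 p)) :=
    (hcont p (mem_Ici.2 (le_max_right _ _))).mono fun x (hx : p < x) =>
      mem_Ici.2 ((le_max_right _ _).trans hx.le)
  obtain ⟨s, (hsz : 𝔥 s < z), hsδ, hps⟩ := ((hlim.eventually (gt_mem_nhds hp)).and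
    ((eventually_nhdsWithin_of_eventually_nhds (gt_mem_nhds (max_lt hrδ hδ))).and
      self_mem_nhdsWithin)).exists
  exact ⟨s, (le_max_right _ _).trans_lt hps, (le_max_left _ _).trans_lt hps, hsδ, hsz⟩

end DimInv

def IsSeparatedAdditive (μ : OuterMeasure ℝ) (δ : ℝ) : Prop :=
  ∀ ⦃A B : Set ℝ⦄, (∀ a ∈ A, ∀ b ∈ B, δ ≤ |a - b|) → μ (A ∪ B) = μ A + μ B

namespace IsSeparatedAdditive

variable {μ : OuterMeasure ℝ} {δ : ℝ}

theorem sum_le_measure_biUnion (hμ : IsSeparatedAdditive μ δ) (hδ : 0 ≤ δ) {x₀ : ℝ}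
    {C : ℤ → Set ℝ} (hC : ∀ k : ℤ, C k ⊆ Icc (x₀ + 2 * k * δ) (x₀ + 2 * k * δ + δ))
    (F : Finset ℤ) : ∑ k ∈ F, μ (C k) ≤ μ (⋃ k ∈ F, C k) := by
  induction F using Finset.induction_on_max with
  | empty => simp
  | insert a F hlt ih =>
    rw [Finset.sum_insert fun ha => (hlt a ha).false, Finset.set_biUnion_insert,
      hμ fun p hp q hq => ?_]
    · exact add_le_add_right ih _
    obtain ⟨k, hk, hqk⟩ := mem_iUnion₂.1 hq
    have hka : (k : ℝ) ≤ a - 1 := by exact_mod_cast Int.le_sub_one_of_lt (hlt k hk)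
    have hp_lo := (hC a hp).1
    have hq_hi := (hC k hqk).2
    have hkδ : (k : ℝ) * δ ≤ (a - 1) * δ := mul_le_mul_of_nonneg_right hka hδ
    exact le_abs.2 (Or.inl (by linarith))

theorem measure_iUnion_le_of_forall_finset (hμ : IsSeparatedAdditive μ δ) (hδ : 0 ≤ δ) {x₀ : ℝ}
    {C : ℤ → Set ℝ} (hC : ∀ k : ℤ, C k ⊆ Icc (x₀ + 2 * k * δ) (x₀ + 2 * k * δ + δ))
    {b : ℝ≥0∞} (hb : ∀ F : Finset ℤ, μ (⋃ k ∈ F, C k) ≤ b) : μ (⋃ k, C k) ≤ b :=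
  calc μ (⋃ k, C k) ≤ ∑' k, μ (C k) := measure_iUnion_le C
    _ = ⨆ F : Finset ℤ, ∑ k ∈ F, μ (C k) := ENNReal.tsum_eq_iSup_sum
    _ ≤ b := iSup_le fun F => (hμ.sum_le_measure_biUnion hδ hC F).trans (hb F)

theorem le_two_mul_of_isBounded (hμ : IsSeparatedAdditive μ δ) (hδ : 0 < δ) {E : Set ℝ}
    {b : ℝ≥0∞} (hb : ∀ S ⊆ E, Bornology.IsBounded S → μ S ≤ b) : μ E ≤ 2 * b := by
  have hblocks (x₀ : ℝ) : μ (⋃ k : ℤ, E ∩ Icc (x₀ + 2 * k * δ) (x₀ + 2 * k * δ + δ)) ≤ b :=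
    hμ.measure_iUnion_le_of_forall_finset hδ.le (fun _ => inter_subset_right) fun F =>
      hb _ (iUnion₂_subset fun _ _ => inter_subset_left)
        ((Bornology.isBounded_biUnion_finset F).2 fun _ _ =>
          Metric.isBounded_Icc _ _ |>.subset inter_subset_right)
  have hcover : E ⊆ (⋃ k : ℤ, E ∩ Icc (0 + 2 * k * δ) (0 + 2 * k * δ + δ)) ∪
      ⋃ k : ℤ, E ∩ Icc (δ + 2 * k * δ) (δ + 2 * k * δ + δ) := by
    intro x hx
    have h₁ : ⌊x / δ⌋ * δ ≤ x := (le_div_iff₀ hδ).1 (Int.floor_le _)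
    have h₂ : x < (⌊x / δ⌋ + 1) * δ := (div_lt_iff₀ hδ).1 (Int.lt_floor_add_one _)
    obtain ⟨k, hk | hk⟩ := Int.even_or_odd' ⌊x / δ⌋ <;> rw [hk] at h₁ h₂ <;> push_cast at h₁ h₂
    · exact Or.inl (mem_iUnion.2 ⟨k, hx, by linarith, by linarith⟩)
    · exact Or.inr (mem_iUnion.2 ⟨k, hx, by linarith, by linarith⟩)
  calc μ E ≤ b + b := (measure_mono hcover).trans
        ((measure_union_le _ _).trans (add_le_add (hblocks 0) (hblocks δ)))
    _ = 2 * b := (two_mul b).symm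

theorem exists_lt_measure_inter_Iic (hμ : IsSeparatedAdditive μ δ) (hδ : 0 < δ) {E : Set ℝ}
    {b : ℝ≥0∞} (hE : 2 * b < μ E) : ∃ m, b < μ (E ∩ Iic m) := by
  by_contra! h
  refine hE.not_ge (hμ.le_two_mul_of_isBounded hδ fun S hSE hS => ?_)
  obtain ⟨m, hm⟩ := hS.bddAbove
  exact (measure_mono (subset_inter hSE hm)).trans (h m)

theorem exists_lt_measure_inter_Ici (hμ : IsSeparatedAdditive μ δ) (hδ : 0 < δ) {E : Set ℝ}
    {b : ℝ≥0∞} (hE : 2 * b < μ E) : ∃ m, b < μ (E ∩ Ici m) := by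
  by_contra! h
  refine hE.not_ge (hμ.le_two_mul_of_isBounded hδ fun S hSE hS => ?_)
  obtain ⟨m, hm⟩ := hS.bddBelow
  exact (measure_mono (subset_inter hSE hm)).trans (h m)

end IsSeparatedAdditive

section PreH

variable {𝔥 : ℝ → ℝ} {δ : ℝ}

/-- The value `⊤` on sets of diameter `≥ δ` makes the Method I outer measure of this gauge use
only the covers admitted in `preH`. -/
noncomputable def preHGauge (𝔥 : ℝ → ℝ) (δ : ℝ) (U : Set ℝ) : ℝ≥0∞ :=
  if Metric.ediam U < ENNReal.ofReal δ then ENNReal.ofReal (𝔥 (Metric.ediam U).toReal) else ⊤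

theorem preHGauge_empty (hδ : 0 < δ) (h0 : 𝔥 0 = 0) : preHGauge 𝔥 δ ∅ = 0 := by
  simp [preHGauge, hδ, h0]

noncomputable def preHOuterMeasure (𝔥 : ℝ → ℝ) (δ : ℝ) (hδ : 0 < δ) (h0 : 𝔥 0 = 0) :
    OuterMeasure ℝ :=
  OuterMeasure.ofFunction (preHGauge 𝔥 δ) (preHGauge_empty hδ h0)

theorem preHOuterMeasure_apply (hδ : 0 < δ) (h0 : 𝔥 0 = 0) (E : Set ℝ) :
    preHOuterMeasure 𝔥 δ hδ h0 E = preH 𝔥 δ E := by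
  rw [preHOuterMeasure, OuterMeasure.ofFunction_eq_iInf_mem (preHGauge 𝔥 δ) _
    (P := fun U => Metric.ediam U < ENNReal.ofReal δ) (fun _ hU => if_neg hU), preH]
  refine iInf_congr fun t => ?_
  rw [iInf_comm]
  exact iInf_congr fun _ => iInf_congr fun ht => tsum_congr fun i => if_pos (ht i)

theorem isSeparatedAdditive_preHOuterMeasure (hδ : 0 < δ) (h0 : 𝔥 0 = 0) :
    IsSeparatedAdditive (preHOuterMeasure 𝔥 δ hδ h0) δ := by
  intro A B hAB
  refine OuterMeasure.ofFunction_union_of_top_of_nonempty_inter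
    fun U ⟨a, haA, haU⟩ ⟨b, hbB, hbU⟩ => if_neg (not_lt.2 ?_)
  calc ENNReal.ofReal δ ≤ edist a b := by
        rw [edist_dist, Real.dist_eq]; exact ENNReal.ofReal_le_ofReal (hAB a haA b hbB)
    _ ≤ Metric.ediam U := Metric.edist_le_ediam_of_mem haU hbU

theorem preHOuterMeasure_le_of_ediam_le (hδ : 0 < δ) (h0 : 𝔥 0 = 0)
    (hmono : MonotoneOn 𝔥 (Ici 0)) {S : Set ℝ} {d : ℝ} (hd : 0 ≤ d) (hdδ : d < δ)
    (hS : Metric.ediam S ≤ ENNReal.ofReal d) :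
    preHOuterMeasure 𝔥 δ hδ h0 S ≤ ENNReal.ofReal (𝔥 d) := by
  refine (OuterMeasure.ofFunction_le S).trans ?_
  rw [preHGauge, if_pos (hS.trans_lt ((ENNReal.ofReal_lt_ofReal_iff_of_nonneg hd).2 hdδ))]
  exact ENNReal.ofReal_le_ofReal
    (hmono ENNReal.toReal_nonneg hd (ENNReal.toReal_le_of_le_ofReal hd hS))

end PreH

theorem MeasureTheory.OuterMeasure.exists_le_inter_Iic_and_inter_Ici_add (μ : OuterMeasure ℝ)
    {E : Set ℝ} {b c : ℝ≥0∞} {r s : ℝ} (hL : ∃ m, b ≤ μ (E ∩ Iic m)) (hR : ∃ m, b ≤ μ (E ∩ Ici m))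
    (hrs : r < s) (hmid : ∀ x, μ (E ∩ Icc x (x + s)) ≤ c) (hc : c ≠ ⊤) (hE : b + c + b ≤ μ E) :
    ∃ m, b ≤ μ (E ∩ Iic m) ∧ b ≤ μ (E ∩ Ici (m + r)) := by
  by_contra! hsplit
  set T := {m | b ≤ μ (E ∩ Iic m)}
  obtain ⟨m₁, hm₁⟩ := hR
  have hT : BddBelow T := ⟨m₁ - r, fun m hm => by
    by_contra! h
    exact (hsplit m hm).not_ge (hm₁.trans (measure_mono
      (inter_subset_inter_right _ (Ici_subset_Ici.2 (by linarith)))))⟩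
  obtain ⟨ε, hε, hεs⟩ : ∃ ε, 0 < ε ∧ r + 2 * ε = s := ⟨(s - r) / 2, by linarith, by ring⟩
  have hleft : μ (E ∩ Iic (sInf T - ε)) < b := not_le.1 fun h => by
    linarith [csInf_le hT h]
  obtain ⟨m, hmT, hm⟩ := exists_lt_of_csInf_lt hL (lt_add_of_pos_right (sInf T) hε)
  have hcover : E ⊆ E ∩ Iic (sInf T - ε) ∪ E ∩ Icc (sInf T - ε) (sInf T - ε + s) ∪
      E ∩ Ici (m + r) := by
    intro x hx
    rcases le_or_gt x (sInf T - ε) with h | h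
    · exact Or.inl (Or.inl ⟨hx, h⟩)
    rcases le_or_gt (m + r) x with h' | h'
    · exact Or.inr ⟨hx, h'⟩
    · exact Or.inl (Or.inr ⟨hx, h.le, by linarith⟩)
  refine (measure_mono hcover).not_gt (hE.trans_lt' ?_)
  calc μ (_ ∪ _ ∪ _) ≤ μ (E ∩ Iic (sInf T - ε)) + μ (E ∩ Icc (sInf T - ε) (sInf T - ε + s))
        + μ (E ∩ Ici (m + r)) :=
      (measure_union_le _ _).trans (add_le_add_left (measure_union_le _ _) _)
    _ < b + c + b := ENNReal.add_lt_add
      (ENNReal.add_lt_add_of_lt_of_le (ne_top_of_le_ne_top hc (hmid _)) hleft (hmid _))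
      (hsplit m hmT)

theorem stmt18 :
    ∃ c : ℝ, 0 < c ∧
      ∀ 𝔥 : ℝ → ℝ, IsDimFun 𝔥 → ∀ δ : ℝ, 0 < δ →
        ∀ I : Set ℝ, I.OrdConnected → ∀ E : Set ℝ, E ⊆ I → ∀ η : ℝ, 0 < η →
          dimInv 𝔥 (η / 8) < δ → ENNReal.ofReal η ≤ preH 𝔥 δ E →
          ∃ Im Ip : Set ℝ, Im.OrdConnected ∧ Ip.OrdConnected ∧ Im ⊆ I ∧ Ip ⊆ I ∧
            (∀ x ∈ Im, ∀ y ∈ Ip, dimInv 𝔥 (η / 8) ≤ |x - y|) ∧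
            ENNReal.ofReal (c * η) ≤ preH 𝔥 δ (Im ∩ E) ∧
            ENNReal.ofReal (c * η) ≤ preH 𝔥 δ (Ip ∩ E) := by
  refine ⟨1 / 4, by norm_num, fun 𝔥 h𝔥 δ hδ I hI E hEI η hη hrδ hηE => ?_⟩
  obtain ⟨hmono, hcont, h0, hnn⟩ := h𝔥
  set μ := preHOuterMeasure 𝔥 δ hδ h0
  have hμ : IsSeparatedAdditive μ δ := isSeparatedAdditive_preHOuterMeasure hδ h0
  obtain ⟨s, hs, hrs, hsδ, h𝔥s⟩ := exists_dimInv_lt_lt_and_apply_lt hcont h0 hδ hrδ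
    (by positivity) (by linarith : η / 8 < η / 2)
  set b := ENNReal.ofReal (1 / 4 * η)
  have hE : b + ENNReal.ofReal (𝔥 s) + b < μ E := by
    have := hnn s hs.le
    rw [preHOuterMeasure_apply, ← ENNReal.ofReal_add (by positivity) this,
      ← ENNReal.ofReal_add (by positivity) (by positivity)]
    exact ((ENNReal.ofReal_lt_ofReal_iff hη).2 (by linarith)).trans_le hηE
  have h2b : 2 * b < μ E := hE.trans_le' (two_mul b ▸ add_le_add_left le_self_add b)
  obtain ⟨m, hL, hR⟩ := μ.exists_le_inter_Iic_and_inter_Ici_add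
    ((hμ.exists_lt_measure_inter_Iic hδ h2b).imp fun _ => le_of_lt)
    ((hμ.exists_lt_measure_inter_Ici hδ h2b).imp fun _ => le_of_lt) hrs
    (fun x => (measure_mono inter_subset_right).trans (preHOuterMeasure_le_of_ediam_le hδ h0
      hmono hs.le hsδ (by rw [Real.ediam_Icc, add_sub_cancel_left])))
    ENNReal.ofReal_ne_top hE.le
  refine ⟨I ∩ Iic m, I ∩ Ici (m + dimInv 𝔥 (η / 8)), hI.inter ordConnected_Iic,
    hI.inter ordConnected_Ici, inter_subset_left, inter_subset_left, fun x hx y hy => ?_, ?_, ?_⟩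
  · rw [abs_sub_comm]
    exact le_abs.2 (Or.inl (by linarith [mem_Iic.1 hx.2, mem_Ici.1 hy.2]))
  · rwa [inter_right_comm, inter_eq_right.2 hEI, ← preHOuterMeasure_apply hδ h0]
  · rwa [inter_right_comm, inter_eq_right.2 hEI, ← preHOuterMeasure_apply hδ h0]
end

section
/- Let h be a dimension function such that h ≺ x^α for every α > 0, i.e. lim_{x→0⁺} x^α/h(x) = 0 for every α > 0. Then there exists a set G ⊆ ℝ² such that H^h(G) = 0 and, for every direction e on the unit circle, G contains two distinct points x, y with x − y parallel to e. -/
open MeasureTheory Set Filter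

/-! Write `A_S ⊆ [0, 1]` for the reals whose binary digits vanish outside `S ⊆ ℕ`. If `S` misses
a block of positions `[m, n)`, then `A_S` is covered by `2 ^ m` sets of diameter `2 ^ (-n)`, one
for each choice of the first `m` digits. Choosing scales `N₀ < N₁ < ⋯` so sparse that
`2 ^ N_k * h (C * 2 ^ (-N_{k+1})) → 0` and taking for `S` the union of the blocks
`[N_{2k}, N_{2k+1})`, both `S` and `Sᶜ` miss infinitely many blocks, so the images of `A_S` and
`A_{Sᶜ}` under the `C`-Lipschitz map `θ ↦ e^{2πiθ}` are `H^h`-null. Splitting the digits of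
`s ∈ (0, 1]` along `S` and `Sᶜ` writes `s = θ + φ` with `θ ∈ A_S`, `φ ∈ A_{Sᶜ}`, `θ ≠ φ`; the
chord from `e^{2πiθ}` to `e^{2πiφ}` is perpendicular to `e^{πi(θ+φ)}`, so chords of the union
point in every direction. -/

open Topology Real
open scoped ENNReal NNReal

namespace Real

variable {b : ℕ}

theorem ofDigits_lt_one (hb : 1 < b) {a : ℕ → Fin b} {j : ℕ} (hj : (a j : ℕ) + 1 < b) :
    ofDigits a < 1 := by
  have hlast (i : ℕ) : ofDigitsTerm (fun _ ↦ (⟨b - 1, Nat.sub_one_lt_of_lt hb⟩ : Fin b)) i =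
      (b - 1) * ((b : ℝ) ^ (i + 1))⁻¹ := by
    simp [ofDigitsTerm, Nat.cast_sub hb.le]
  rw [← ofDigits_const_last_eq_one' hb]
  refine Summable.tsum_lt_tsum (i := j) (fun i ↦ ?_) ?_ summable_ofDigitsTerm
    summable_ofDigitsTerm
  · rw [hlast]
    exact ofDigitsTerm_le
  · rw [hlast, ofDigitsTerm]
    have : (a j : ℝ) < b - 1 := by
      rw [lt_sub_iff_add_lt]
      exact_mod_cast hj
    gcongr

theorem ofDigits_lt_ofDigits (hb : 1 < b) {a a' : ℕ → Fin b} {n j : ℕ}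
    (heq : ∀ i < n, a i = a' i) (hlt : a n < a' n) (hnj : n < j) (hj : (a j : ℕ) + 1 < b) :
    ofDigits a < ofDigits a' := by
  have htail : ofDigits (fun i ↦ a (i + (n + 1))) < 1 :=
    ofDigits_lt_one hb (j := j - (n + 1)) (by rwa [Nat.sub_add_cancel hnj])
  have htail' := ofDigits_nonneg (fun i ↦ a' (i + (n + 1)))
  have hsum :
      ∑ i ∈ Finset.range n, ofDigitsTerm a i = ∑ i ∈ Finset.range n, ofDigitsTerm a' i :=
    Finset.sum_congr rfl fun i hi ↦ by simp [ofDigitsTerm, heq i (Finset.mem_range.mp hi)]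
  have hdigit : (a n : ℝ) + 1 ≤ a' n := by exact_mod_cast hlt
  have hpos : 0 < ((b : ℝ) ^ (n + 1))⁻¹ := by
    have : (0 : ℝ) < b := by exact_mod_cast hb.pos
    positivity
  rw [ofDigits_eq_sum_add_ofDigits a (n + 1), ofDigits_eq_sum_add_ofDigits a' (n + 1),
    Finset.sum_range_succ, Finset.sum_range_succ, hsum, ofDigitsTerm, ofDigitsTerm]
  nlinarith

theorem eq_of_ofDigits_eq (hb : 1 < b) {a a' : ℕ → Fin b}
    (ha : {i | (a i : ℕ) + 1 < b}.Infinite) (ha' : {i | (a' i : ℕ) + 1 < b}.Infinite)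
    (h : ofDigits a = ofDigits a') : a = a' := by
  classical
  by_contra hne
  have hex : ∃ i, a i ≠ a' i := Function.ne_iff.mp hne
  have heq (i : ℕ) (hi : i < Nat.find hex) : a i = a' i := not_not.mp (Nat.find_min hex hi)
  rcases lt_or_gt_of_ne (Nat.find_spec hex) with hlt | hlt
  · obtain ⟨j, hj, hnj⟩ := ha.exists_gt (Nat.find hex)
    exact (ofDigits_lt_ofDigits hb heq hlt hnj hj).ne h
  · obtain ⟨j, hj, hnj⟩ := ha'.exists_gt (Nat.find hex)
    exact (ofDigits_lt_ofDigits hb (fun i hi ↦ (heq i hi).symm) hlt hnj hj).ne' h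

theorem ofDigits_indicator_add_ofDigits_indicator_compl [NeZero b] (S : Set ℕ)
    (d : ℕ → Fin b) :
    ofDigits (S.indicator d) + ofDigits (Sᶜ.indicator d) = ofDigits d := by
  rw [ofDigits, ofDigits, ofDigits, ← summable_ofDigitsTerm.tsum_add summable_ofDigitsTerm]
  congr with i
  by_cases hi : i ∈ S <;> simp [ofDigitsTerm, hi]

end Real

open Real

def digitSet (b : ℕ) [NeZero b] (S : Set ℕ) : Set ℝ :=
  ofDigits '' {a : ℕ → Fin b | Function.support a ⊆ S}

section digitSet

variable {b : ℕ} [NeZero b] {S : Set ℕ}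

theorem digitSet_subset_Ico (hb : 1 < b) (hS : Sᶜ.Nonempty) : digitSet b S ⊆ Ico 0 1 := by
  rintro _ ⟨a, ha, rfl⟩
  obtain ⟨j, hj⟩ := hS
  refine ⟨ofDigits_nonneg a, ofDigits_lt_one hb (j := j) ?_⟩
  simpa [Function.support_subset_iff'.mp ha j hj] using hb

theorem exists_mem_digitSet_add_eq (hb : 1 < b) (hS : S.Infinite) (hSc : Sᶜ.Infinite)
    {s : ℝ} (hs : s ∈ Ioc 0 1) : ∃ θ ∈ digitSet b S, ∃ φ ∈ digitSet b Sᶜ, θ + φ = s ∧ θ ≠ φ := by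
  obtain ⟨d, -, rfl⟩ := ofDigits_SurjOn hb (Ioc_subset_Icc_self hs)
  refine ⟨_, mem_image_of_mem _ support_indicator_subset, _,
    mem_image_of_mem _ support_indicator_subset,
    ofDigits_indicator_add_ofDigits_indicator_compl S d, fun heq ↦ hs.1.ne' ?_⟩
  have hfreq (T : Set ℕ) (hT : Tᶜ.Infinite) :
      {i | ((T.indicator d i : Fin b) : ℕ) + 1 < b}.Infinite :=
    hT.mono fun i hi ↦ by simpa [indicator_of_notMem hi] using hb
  have hind := eq_of_ofDigits_eq hb (hfreq S hSc) (hfreq Sᶜ (by rwa [compl_compl])) heq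
  have hzero : S.indicator d = 0 := by
    ext i : 1
    have := congrFun hind i
    by_cases hi : i ∈ S <;> simp_all
  rw [← ofDigits_indicator_add_ofDigits_indicator_compl S d, ← hind, hzero]
  simp [ofDigits, ofDigitsTerm]

theorem digitSet_subset_iUnion_ediam_le {m n : ℕ} (hgap : Disjoint (Ico m n) S) :
    ∃ F : (Fin m → Fin b) → Set ℝ, digitSet b S ⊆ ⋃ q, F q ∧
      ∀ q, Metric.ediam (F q) ≤ ENNReal.ofReal ((b : ℝ) ^ n)⁻¹ := by
  refine ⟨fun q ↦ ofDigits '' {a | Function.support a ⊆ S ∧ ∀ i : Fin m, a i = q i},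
    ?_, fun q ↦ ?_⟩
  · rintro _ ⟨a, ha, rfl⟩
    exact mem_iUnion.mpr ⟨fun i ↦ a i, a, ⟨ha, fun _ ↦ rfl⟩, rfl⟩
  · refine Metric.ediam_le fun _ ⟨a, ⟨ha, hqa⟩, hx⟩ _ ⟨a', ⟨ha', hqa'⟩, hy⟩ ↦ ?_
    subst hx hy
    rw [edist_dist, Real.dist_eq]
    refine ENNReal.ofReal_le_ofReal (abs_ofDigits_sub_ofDigits_le fun i hi ↦ ?_)
    by_cases him : i < m
    · exact (hqa ⟨i, him⟩).trans (hqa' ⟨i, him⟩).symm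
    · have hiS : i ∉ S := hgap.notMem_of_mem_left ⟨not_lt.mp him, hi⟩
      rw [Function.support_subset_iff'.mp ha i hiS, Function.support_subset_iff'.mp ha' i hiS]

theorem mkMetric_image_digitSet_eq_zero {X : Type*} [EMetricSpace X] [MeasurableSpace X]
    [BorelSpace X] {f : ℝ → X} {K : ℝ≥0} (hf : LipschitzWith K f) {h : ℝ → ℝ}
    (hh : MonotoneOn h (Ici 0)) (hb : 1 < b) {m n : ℕ → ℕ}
    (hgap : ∀ k, Disjoint (Ico (m k) (n k)) S) (hn : Tendsto n atTop atTop)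
    (hmass : Tendsto (fun k ↦ (b : ℝ) ^ m k * h (K * ((b : ℝ) ^ n k)⁻¹)) atTop (𝓝 0)) :
    Measure.mkMetric (fun d ↦ ENNReal.ofReal (h d.toReal)) (f '' digitSet b S) = 0 := by
  choose F hcover hdiam using fun k ↦ digitSet_subset_iUnion_ediam_le (b := b) (hgap k)
  have hb' : (1 : ℝ) < b := by exact_mod_cast hb
  have hr : Tendsto (fun k ↦ (K : ℝ≥0∞) * ENNReal.ofReal ((b : ℝ) ^ n k)⁻¹) atTop (𝓝 0) := by
    have := ENNReal.tendsto_ofReal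
      ((tendsto_inv_atTop_zero.comp (tendsto_pow_atTop_atTop_of_one_lt hb')).comp hn)
    simpa using ENNReal.Tendsto.const_mul this (Or.inr ENNReal.coe_ne_top)
  have hdiam' (k : ℕ) (q : Fin (m k) → Fin b) :
      Metric.ediam (f '' F k q) ≤ K * ENNReal.ofReal ((b : ℝ) ^ n k)⁻¹ :=
    (hf.ediam_image_le _).trans (mul_le_mul_right (hdiam k q) _)
  have hsum (k : ℕ) : ∑ q, ENNReal.ofReal (h (Metric.ediam (f '' F k q)).toReal) ≤
      ENNReal.ofReal ((b : ℝ) ^ m k * h (K * ((b : ℝ) ^ n k)⁻¹)) := by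
    have hterm (q : Fin (m k) → Fin b) :
        ENNReal.ofReal (h (Metric.ediam (f '' F k q)).toReal) ≤
          ENNReal.ofReal (h (K * ((b : ℝ) ^ n k)⁻¹)) := by
      refine ENNReal.ofReal_le_ofReal
        (hh ENNReal.toReal_nonneg (mem_Ici.mpr (by positivity)) ?_)
      refine ENNReal.toReal_le_of_le_ofReal (by positivity) ((hdiam' k q).trans_eq ?_)
      rw [ENNReal.ofReal_mul K.coe_nonneg, ENNReal.ofReal_coe_nnreal]
    calc ∑ q, ENNReal.ofReal (h (Metric.ediam (f '' F k q)).toReal)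
        ≤ ∑ _q : Fin (m k) → Fin b, ENNReal.ofReal (h (K * ((b : ℝ) ^ n k)⁻¹)) :=
          Finset.sum_le_sum fun q _ ↦ hterm q
      _ = ENNReal.ofReal ((b : ℝ) ^ m k * h (K * ((b : ℝ) ^ n k)⁻¹)) := by
        rw [Finset.sum_const, Finset.card_univ, nsmul_eq_mul,
          ENNReal.ofReal_mul (by positivity : (0 : ℝ) ≤ (b : ℝ) ^ m k)]
        simp
  refine le_antisymm ?_ zero_le
  calc Measure.mkMetric (fun d ↦ ENNReal.ofReal (h d.toReal)) (f '' digitSet b S)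
      ≤ liminf (fun k ↦ ∑ q, ENNReal.ofReal (h (Metric.ediam (f '' F k q)).toReal)) atTop :=
        Measure.mkMetric_le_liminf_sum _ _ hr _ (.of_forall hdiam')
          (.of_forall fun k ↦ (image_mono (hcover k)).trans (image_iUnion.le)) _
    _ ≤ liminf (fun k ↦ ENNReal.ofReal ((b : ℝ) ^ m k * h (K * ((b : ℝ) ^ n k)⁻¹)))
          atTop :=
        liminf_le_liminf (.of_forall hsum)
    _ = 0 := by simpa using (ENNReal.tendsto_ofReal hmass).liminf_eq

end digitSet

noncomputable def circ (α : ℝ) : EuclideanSpace ℝ (Fin 2) := !₂[cos α, sin α]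

theorem norm_circ (α : ℝ) : ‖circ α‖ = 1 := by
  simp [circ, EuclideanSpace.norm_eq, Fin.sum_univ_two]

theorem circ_sub_circ (α β : ℝ) :
    circ α - circ β = (2 * sin ((α - β) / 2)) • circ ((α + β) / 2 + π / 2) := by
  ext i
  fin_cases i
  · simp [circ, cos_sub_cos, cos_add_pi_div_two]; ring
  · simp [circ, sin_sub_sin, sin_add_pi_div_two]

theorem circ_add_int_mul_pi (α : ℝ) (k : ℤ) :
    circ (α + k * π) = ((-1 : ℝ) ^ k) • circ α := by
  ext i
  fin_cases i <;> simp [circ, cos_add_int_mul_pi, sin_add_int_mul_pi]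

theorem norm_circ_sub_circ (α β : ℝ) : ‖circ α - circ β‖ = 2 * |sin ((α - β) / 2)| := by
  rw [circ_sub_circ, norm_smul, norm_circ, mul_one, Real.norm_eq_abs, abs_mul, abs_two]

theorem lipschitzWith_circ : LipschitzWith 1 circ := by
  refine LipschitzWith.of_dist_le_mul fun α β ↦ ?_
  rw [dist_eq_norm, norm_circ_sub_circ, NNReal.coe_one, one_mul, Real.dist_eq]
  have := abs_sin_le_abs (x := (α - β) / 2)
  rw [abs_div, abs_two] at this
  linarith

theorem eq_of_circ_eq {α β : ℝ} (hαβ : |α - β| < 2 * π) (h : circ α = circ β) :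
    α = β := by
  have hsin : sin ((α - β) / 2) = 0 := by
    simpa [h] using (norm_circ_sub_circ α β).symm
  rw [abs_lt] at hαβ
  have := (sin_eq_zero_iff_of_lt_of_lt (by linarith) (by linarith)).mp hsin
  linarith

theorem exists_circ_eq {e : EuclideanSpace ℝ (Fin 2)} (he : ‖e‖ = 1) :
    ∃ ψ, circ ψ = e := by
  obtain ⟨ψ, hψ⟩ := (Complex.norm_eq_one_iff ⟨e 0, e 1⟩).mp (by
    rw [Complex.norm_def, Complex.normSq_mk, ← he, EuclideanSpace.norm_eq, Fin.sum_univ_two]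
    simp [sq])
  refine ⟨ψ, ?_⟩
  ext i
  fin_cases i
  · simpa [circ] using congrArg Complex.re hψ
  · simpa [circ] using congrArg Complex.im hψ

theorem exists_chord_parallel {A B : Set ℝ} (hA : A ⊆ Ico 0 1) (hB : B ⊆ Ico 0 1)
    (hAB : ∀ s ∈ Ioc (0 : ℝ) 1, ∃ θ ∈ A, ∃ φ ∈ B, θ + φ = s ∧ θ ≠ φ)
    {e : EuclideanSpace ℝ (Fin 2)} (he : ‖e‖ = 1) :
    ∃ x ∈ (fun t ↦ circ (2 * π * t)) '' A, ∃ y ∈ (fun t ↦ circ (2 * π * t)) '' B,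
      x ≠ y ∧ ∃ t : ℝ, x - y = t • e := by
  obtain ⟨ψ, rfl⟩ := exists_circ_eq he
  -- `s ≡ ψ / π - 1 / 2 (mod 1)` makes the chord direction `π s + π / 2` equal to `ψ` mod `π`
  obtain ⟨θ, hθ, φ, hφ, hsum, hne⟩ := hAB (toIocMod one_pos 0 (ψ / π - 1 / 2))
    (by simpa using toIocMod_mem_Ioc one_pos 0 (ψ / π - 1 / 2))
  rw [← self_sub_toIocDiv_zsmul, zsmul_one] at hsum
  generalize toIocDiv one_pos 0 (ψ / π - 1 / 2) = k at hsum
  have hangle : (2 * π * θ + 2 * π * φ) / 2 + π / 2 = ψ + ((-k : ℤ) : ℝ) * π := by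
    have : π * (θ + φ) = ψ - π / 2 - k * π := by
      rw [hsum]
      field_simp
    push_cast
    linarith
  refine ⟨_, mem_image_of_mem _ hθ, _, mem_image_of_mem _ hφ, fun h ↦ hne ?_,
    2 * sin ((2 * π * θ - 2 * π * φ) / 2) * (-1) ^ (-k), ?_⟩
  · have hθφ : |θ - φ| < 1 := by
      obtain ⟨⟨hθ0, hθ1⟩, ⟨hφ0, hφ1⟩⟩ := And.intro (hA hθ) (hB hφ)
      rw [abs_sub_lt_iff]
      constructor <;> linarith
    have hlt : |2 * π * θ - 2 * π * φ| < 2 * π := by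
      rw [← mul_sub, abs_mul, abs_of_pos two_pi_pos]
      exact mul_lt_of_lt_one_right two_pi_pos hθφ
    simpa [pi_pos.ne'] using eq_of_circ_eq hlt h
  · rw [circ_sub_circ, hangle, circ_add_int_mul_pi, smul_smul]

theorem Set.infinite_compl_of_disjoint_Ico {S : Set ℕ} {m n : ℕ → ℕ}
    (hgap : ∀ k, Disjoint (Ico (m k) (n k)) S) (hmn : ∀ k, m k < n k)
    (hm : Tendsto m atTop atTop) : Sᶜ.Infinite :=
  Set.infinite_of_forall_exists_gt fun a ↦
    let ⟨k, hk⟩ := (hm.eventually_gt_atTop a).exists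
    ⟨m k, (hgap k).notMem_of_mem_left ⟨le_rfl, hmn k⟩, hk⟩

theorem tendsto_apply_mul_inv_two_pow {h : ℝ → ℝ} (hh : ContinuousWithinAt h (Ici 0) 0)
    {c : ℝ} (hc : 0 ≤ c) : Tendsto (fun n : ℕ ↦ h (c * (2 ^ n)⁻¹)) atTop (𝓝 (h 0)) := by
  refine hh.tendsto.comp (tendsto_nhdsWithin_iff.mpr
    ⟨?_, .of_forall fun n ↦ mem_Ici.mpr (by positivity)⟩)
  simpa using (tendsto_inv_atTop_zero.comp
    (tendsto_pow_atTop_atTop_of_one_lt one_lt_two)).const_mul c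

theorem exists_strictMono_tendsto_zero {g : ℕ → ℕ → ℝ}
    (hg : ∀ a, Tendsto (g a) atTop (𝓝 0)) :
    ∃ N : ℕ → ℕ, StrictMono N ∧ Tendsto (fun k ↦ g (N k) (N (k + 1))) atTop (𝓝 0) := by
  have hnext (a : ℕ) : ∃ n, a < n ∧ ‖g a n‖ < 1 / ((a : ℝ) + 1) := by
    have hball :=
      (hg a).eventually (Metric.ball_mem_nhds 0 (Nat.one_div_pos_of_nat (n := a)))
    obtain ⟨n, hn, hgn⟩ := ((eventually_gt_atTop a).and hball).exists
    exact ⟨n, hn, by simpa using hgn⟩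
  choose next hlt hsmall using hnext
  have hN : StrictMono fun k ↦ next^[k] 0 :=
    strictMono_nat_of_lt_succ fun k ↦ by rw [Function.iterate_succ_apply']; exact hlt _
  refine ⟨_, hN, squeeze_zero_norm (fun k ↦ ?_)
    (tendsto_one_div_add_atTop_nhds_zero_nat.comp hN.tendsto_atTop)⟩
  rw [Function.iterate_succ_apply']
  exact (hsmall _).le

theorem stmt19_general (h : ℝ → ℝ) (hh : IsDimFun h) :
    ∃ G : Set (EuclideanSpace ℝ (Fin 2)), genH h G = 0 ∧
      ∀ e : EuclideanSpace ℝ (Fin 2), ‖e‖ = 1 →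
        ∃ x ∈ G, ∃ y ∈ G, x ≠ y ∧ ∃ t : ℝ, x - y = t • e := by
  obtain ⟨hmono, hcont, h0, -⟩ := hh
  set f : ℝ → EuclideanSpace ℝ (Fin 2) := fun t ↦ circ (2 * π * t)
  obtain ⟨K, hf⟩ : ∃ K, LipschitzWith K f :=
    ⟨_, lipschitzWith_circ.comp (lipschitzWith_smul (2 * π))⟩
  obtain ⟨N, hN, hNh⟩ := exists_strictMono_tendsto_zero fun a ↦ by
    simpa [h0] using (tendsto_apply_mul_inv_two_pow (hcont 0 self_mem_Ici) K.coe_nonneg).const_mul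
      ((2 : ℝ) ^ a)
  have hblocks (T : Set ℕ) (j : ℕ → ℕ) (hj : Tendsto j atTop atTop)
      (hgap : ∀ k, Disjoint (Ico (N (j k)) (N (j k + 1))) T) :
      genH h (f '' digitSet 2 T) = 0 ∧ Tᶜ.Infinite :=
    ⟨mkMetric_image_digitSet_eq_zero hf hmono one_lt_two hgap
        (hN.tendsto_atTop.comp (tendsto_add_atTop_nat 1 |>.comp hj)) (hNh.comp hj),
      Set.infinite_compl_of_disjoint_Ico hgap (fun k ↦ hN (Nat.lt_succ_self _))
        (hN.tendsto_atTop.comp hj)⟩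
  set S := ⋃ k, Ico (N (2 * k)) (N (2 * k + 1))
  obtain ⟨hnullS, hSc⟩ := hblocks S (2 * · + 1)
    (tendsto_atTop_mono (fun k ↦ (by omega : k ≤ 2 * k + 1)) tendsto_id)
    fun k ↦ disjoint_iUnion_right.mpr fun i ↦
      hN.monotone.pairwise_disjoint_on_Ico_succ (by omega : 2 * k + 1 ≠ 2 * i)
  obtain ⟨hnullSc, hS⟩ := hblocks Sᶜ (2 * ·)
    (tendsto_atTop_mono (fun k ↦ (by omega : k ≤ 2 * k)) tendsto_id)
    fun k ↦ disjoint_compl_right_iff_subset.mpr (subset_iUnion_of_subset k subset_rfl)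
  rw [compl_compl] at hS
  refine ⟨f '' digitSet 2 S ∪ f '' digitSet 2 Sᶜ, measure_union_null hnullS hnullSc,
    fun e he ↦ ?_⟩
  obtain ⟨x, hx, y, hy, hxy, t, hxy_eq⟩ := exists_chord_parallel
    (digitSet_subset_Ico one_lt_two hSc.nonempty)
    (digitSet_subset_Ico one_lt_two (by rwa [compl_compl] : Sᶜᶜ.Infinite).nonempty)
    (fun s hs ↦ exists_mem_digitSet_add_eq one_lt_two hS hSc hs) he
  exact ⟨x, .inl hx, y, .inr hy, hxy, t, hxy_eq⟩

theorem stmt19 (h : ℝ → ℝ) (hh : IsDimFun h)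
    (hzero : ∀ α : ℝ, 0 < α →
      Tendsto (fun x => x ^ α / h x) (nhdsWithin 0 (Ioi 0)) (nhds 0)) :
    ∃ G : Set (EuclideanSpace ℝ (Fin 2)), genH h G = 0 ∧
      ∀ e : EuclideanSpace ℝ (Fin 2), ‖e‖ = 1 →
        ∃ x ∈ G, ∃ y ∈ G, x ≠ y ∧ ∃ t : ℝ, x - y = t • e :=
  stmt19_general h hh
end
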